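/- Let a, b ∈ ℂ with b ≠ −1. Then every commutative associative bilinear multiplication · on 𝒲(a,b) satisfying the compatibility condition 2 z·[x,y] = [z·x, y] + [x, z·y] for all x, y, z is identically zero; i.e., there are no non-trivial transposed Poisson algebra structures on 𝒲(a,b) for b ≠ −1. -/

import Mathlib

/-
Each multiplication operator `z · _` of a transposed Poisson structure is a ½-derivation
`2 D[x, y] = [D x, y] + [x, D y]` of `𝒲(a,b)`, and for `b ≠ -1` every ½-derivation is a scalar
multiple of the identity. To see this, subtract the scalar and fix a degree shift `t`: the
coefficients of `L (m + t)` and `I (m + t)` in `D (L m)` and `D (I m)` satisfy linear recursions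
in `m` coming from the ½-derivation identity on pairs of basis elements. These recursions
confine each coefficient function to a single value of `m`, and two further instances of the
identity then make that value vanish. Hence `x · y = c x • y`, and commutativity
`c x • y = c y • x` for linearly independent `x, y` forces `c = 0`.
-/

/-- The underlying space of the Lie algebra `𝒲(a,b)`, with basis
`L m = single (Sum.inl m) 1` and `I n = single (Sum.inr n) 1`. -/
abbrev Wab : Type := (ℤ ⊕ ℤ) →₀ ℂ

/-- The bracket of `𝒲(a,b)` on basis elements:
`[L m, L n] = (m-n) L (m+n)`, `[L m, I n] = -(n+a+bm) I (m+n)`, `[I m, I n] = 0`. -/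
noncomputable def wabBasic (a b : ℂ) : ℤ ⊕ ℤ → ℤ ⊕ ℤ → Wab
  | Sum.inl m, Sum.inl n => (((m : ℂ) - (n : ℂ))) • Finsupp.single (Sum.inl (m + n)) (1 : ℂ)
  | Sum.inl m, Sum.inr n => (-((n : ℂ) + a + b * (m : ℂ))) • Finsupp.single (Sum.inr (m + n)) (1 : ℂ)
  | Sum.inr m, Sum.inl n => (((m : ℂ) + a + b * (n : ℂ))) • Finsupp.single (Sum.inr (m + n)) (1 : ℂ)
  | Sum.inr _, Sum.inr _ => 0

/-- The Lie bracket of `𝒲(a,b)`, extended bilinearly from basis elements. -/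
noncomputable def wabBracket (a b : ℂ) (f g : Wab) : Wab :=
  f.sum fun p c => g.sum fun q d => (c * d) • wabBasic a b p q

/-- The basis element `L m` of `𝒲(a,b)`. -/
noncomputable def Lgen (m : ℤ) : Wab := Finsupp.single (Sum.inl m) 1

/-- The basis element `I m` of `𝒲(a,b)`. -/
noncomputable def Igen (m : ℤ) : Wab := Finsupp.single (Sum.inr m) 1

theorem LinearMap.eq_zero_of_comm_of_forall_eq_smul_id {K V : Type*} [Field K] [AddCommGroup V]
    [Module K V] (hV : 1 < Module.rank K V) (m : V →ₗ[K] V →ₗ[K] V)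
    (hcomm : ∀ x y, m x y = m y x) (hscalar : ∀ z, ∃ c : K, m z = c • LinearMap.id) :
    m = 0 := by
  ext1 z
  obtain ⟨c, hc⟩ := hscalar z
  rcases eq_or_ne z 0 with rfl | hz
  · exact map_zero m
  obtain ⟨y, hy⟩ := exists_linearIndependent_pair_of_one_lt_rank hV hz
  obtain ⟨d, hd⟩ := hscalar y
  have hdc : d • z + (-c) • y = 0 := by
    have := hcomm z y
    rw [hc, hd] at this
    simp only [LinearMap.smul_apply, LinearMap.id_apply] at this
    rw [neg_smul, this, add_neg_cancel]
  rw [hc, neg_eq_zero.mp (LinearIndependent.pair_iff.mp hy _ _ hdc).2, zero_smul,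
    LinearMap.zero_apply]

def IsHalfDerivation {R M : Type*} [CommRing R] [AddCommGroup M] [Module R M]
    (bracket : M → M → M) (D : M →ₗ[R] M) : Prop :=
  ∀ x y, (2 : R) • D (bracket x y) = bracket (D x) y + bracket x (D y)

lemma IsHalfDerivation.sub_smul_id {R M : Type*} [CommRing R] [AddCommGroup M] [Module R M]
    {B : M →ₗ[R] M →ₗ[R] M} {D : M →ₗ[R] M} (hD : IsHalfDerivation (fun x y => B x y) D)
    (c : R) : IsHalfDerivation (fun x y => B x y) (D - c • LinearMap.id) := by
  intro x y
  simp only [LinearMap.sub_apply, LinearMap.smul_apply, LinearMap.id_apply, map_sub, map_smul,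
    smul_sub, hD x y]
  module

lemma Finsupp.sum_mul_ite_eq {α R : Type*} [DecidableEq α] [Semiring R] (f : α →₀ R) (a : α)
    (A : R) : (f.sum fun x v => v * if x = a then A else 0) = f a * A := by
  simp only [mul_ite, mul_zero, Finsupp.sum_ite_eq', Finsupp.mem_support_iff, ne_eq]
  by_cases h : f a = 0 <;> simp [h]

-- `3r + 1 ≡ 1 (mod 3)`, `-2r - 1` is odd and their difference `5r + 2 ≡ 2 (mod 5)`.
lemma Int.exists_ne_zero_ne_zero_ne_add_eq (r : ℤ) :
    ∃ m n : ℤ, m ≠ 0 ∧ n ≠ 0 ∧ m ≠ n ∧ m + n = r :=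
  ⟨3 * r + 1, -2 * r - 1, by omega, by omega, by omega, by ring⟩

theorem one_lt_rank_wab : 1 < Module.rank ℂ Wab := by
  rw [rank_finsupp_self']
  simp

lemma wabBasic_swap (a b : ℂ) (p q : ℤ ⊕ ℤ) : wabBasic a b q p = -wabBasic a b p q := by
  rcases p with m | m <;> rcases q with n | n <;> simp only [wabBasic, neg_zero, ← neg_smul]
  · rw [add_comm n m]; congr 1; ring
  · rw [add_comm n m, neg_neg]
  · rw [add_comm n m]

lemma wabBracket_swap (a b : ℂ) (f g : Wab) : wabBracket a b g f = -wabBracket a b f g := by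
  unfold wabBracket
  rw [Finsupp.sum_comm]
  simp only [Finsupp.sum, ← Finset.sum_neg_distrib]
  refine Finset.sum_congr rfl fun p _ => Finset.sum_congr rfl fun q _ => ?_
  rw [wabBasic_swap, smul_neg, mul_comm]

lemma wabBracket_eq_linearCombination (a b : ℂ) :
    wabBracket a b = fun f g => Finsupp.linearCombination ℂ
      (fun p => Finsupp.linearCombination ℂ (wabBasic a b p)) f g := by
  ext f g : 2
  simp only [Finsupp.linearCombination_apply, LinearMap.finsupp_sum_apply, LinearMap.smul_apply,
    wabBracket, Finsupp.smul_sum, smul_smul]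

lemma wabBracket_Lgen_Lgen (a b : ℂ) (m n : ℤ) :
    wabBracket a b (Lgen m) (Lgen n) = ((m : ℂ) - n) • Lgen (m + n) := by
  simp [wabBracket, Lgen, wabBasic]

lemma wabBracket_Lgen_Igen (a b : ℂ) (m n : ℤ) :
    wabBracket a b (Lgen m) (Igen n) = -((n : ℂ) + a + b * m) • Igen (m + n) := by
  simp [wabBracket, Lgen, Igen, wabBasic]

lemma wabBracket_Igen_Igen (a b : ℂ) (m n : ℤ) : wabBracket a b (Igen m) (Igen n) = 0 := by
  simp [wabBracket, Igen, wabBasic]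

lemma wabBracket_single_right_apply (a b : ℂ) (u : Wab) (q x : ℤ ⊕ ℤ) :
    wabBracket a b u (Finsupp.single q 1) x = u.sum fun p c => c * wabBasic a b p q x := by
  simp [wabBracket, Finsupp.sum_apply]

lemma wabBracket_Lgen_apply_inl (a b : ℂ) (u : Wab) (n s : ℤ) :
    wabBracket a b u (Lgen n) (Sum.inl s) = u (Sum.inl (s - n)) * (s - 2 * n) := by
  have : ∀ p, wabBasic a b p (Sum.inl n) (Sum.inl s) =
      if p = Sum.inl (s - n) then (s - 2 * n : ℂ) else 0 := by
    rintro (k | k) <;> obtain rfl | h := eq_or_ne (k + n) s <;>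
      simp [wabBasic, eq_sub_iff_add_eq, *]
    ring
  rw [Lgen, wabBracket_single_right_apply]
  simp only [this, Finsupp.sum_mul_ite_eq]

lemma wabBracket_Lgen_apply_inr (a b : ℂ) (u : Wab) (n s : ℤ) :
    wabBracket a b u (Lgen n) (Sum.inr s) = u (Sum.inr (s - n)) * (s - n + a + b * n) := by
  have : ∀ p, wabBasic a b p (Sum.inl n) (Sum.inr s) =
      if p = Sum.inr (s - n) then (s - n + a + b * n : ℂ) else 0 := by
    rintro (k | k) <;> obtain rfl | h := eq_or_ne (k + n) s <;>
      simp [wabBasic, eq_sub_iff_add_eq, *]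
  rw [Lgen, wabBracket_single_right_apply]
  simp only [this, Finsupp.sum_mul_ite_eq]

lemma wabBracket_Igen_apply_inl (a b : ℂ) (u : Wab) (n s : ℤ) :
    wabBracket a b u (Igen n) (Sum.inl s) = 0 := by
  rw [Igen, wabBracket_single_right_apply]
  exact Finset.sum_eq_zero fun p _ => by rcases p with k | k <;> simp [wabBasic]

lemma wabBracket_Igen_apply_inr (a b : ℂ) (u : Wab) (n s : ℤ) :
    wabBracket a b u (Igen n) (Sum.inr s) = -u (Sum.inl (s - n)) * (n + a + b * (s - n)) := by
  have : ∀ p, wabBasic a b p (Sum.inr n) (Sum.inr s) =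
      if p = Sum.inl (s - n) then -(n + a + b * (s - n) : ℂ) else 0 := by
    rintro (k | k) <;> obtain rfl | h := eq_or_ne (k + n) s <;>
      simp [wabBasic, eq_sub_iff_add_eq, *]
  rw [Igen, wabBracket_single_right_apply]
  simp only [this, Finsupp.sum_mul_ite_eq]
  ring

namespace IsHalfDerivation

variable {a b : ℂ} {D : Wab →ₗ[ℂ] Wab} (hD : IsHalfDerivation (wabBracket a b) D)
include hD

lemma wab_apply (x y : Wab) (i : ℤ ⊕ ℤ) :
    2 * D (wabBracket a b x y) i = wabBracket a b (D x) y i + wabBracket a b x (D y) i := by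
  simpa using congrArg (· i) (hD x y)

lemma wab_Lgen_Lgen_inl (m n t : ℤ) :
    2 * ((m : ℂ) - n) * D (Lgen (m + n)) (Sum.inl (m + n + t)) =
      D (Lgen m) (Sum.inl (m + t)) * (m - n + t) - D (Lgen n) (Sum.inl (n + t)) * (n - m + t) := by
  have h := hD.wab_apply (Lgen m) (Lgen n) (Sum.inl (m + n + t))
  rw [wabBracket_Lgen_Lgen, map_smul, wabBracket_swap a b (D (Lgen n)), Finsupp.smul_apply,
    Finsupp.neg_apply, wabBracket_Lgen_apply_inl, wabBracket_Lgen_apply_inl,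
    show m + n + t - n = m + t by ring, show m + n + t - m = n + t by ring] at h
  push_cast at h
  linear_combination h

lemma wab_Lgen_Lgen_inr (m n t : ℤ) :
    2 * ((m : ℂ) - n) * D (Lgen (m + n)) (Sum.inr (m + n + t)) =
      D (Lgen m) (Sum.inr (m + t)) * (m + t + a + b * n) -
        D (Lgen n) (Sum.inr (n + t)) * (n + t + a + b * m) := by
  have h := hD.wab_apply (Lgen m) (Lgen n) (Sum.inr (m + n + t))
  rw [wabBracket_Lgen_Lgen, map_smul, wabBracket_swap a b (D (Lgen n)), Finsupp.smul_apply,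
    Finsupp.neg_apply, wabBracket_Lgen_apply_inr, wabBracket_Lgen_apply_inr,
    show m + n + t - n = m + t by ring, show m + n + t - m = n + t by ring] at h
  push_cast at h
  linear_combination h

lemma wab_Lgen_Igen_inl (m n t : ℤ) :
    2 * ((n : ℂ) + a + b * m) * D (Igen (m + n)) (Sum.inl (m + n + t)) =
      D (Igen n) (Sum.inl (n + t)) * (n - m + t) := by
  have h := hD.wab_apply (Lgen m) (Igen n) (Sum.inl (m + n + t))
  rw [wabBracket_Lgen_Igen, map_smul, wabBracket_swap a b (D (Igen n)), Finsupp.smul_apply,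
    Finsupp.neg_apply, wabBracket_Igen_apply_inl, wabBracket_Lgen_apply_inl,
    show m + n + t - m = n + t by ring] at h
  push_cast at h
  linear_combination -h

lemma wab_Lgen_Igen_inr (m n t : ℤ) :
    2 * ((n : ℂ) + a + b * m) * D (Igen (m + n)) (Sum.inr (m + n + t)) =
      D (Lgen m) (Sum.inl (m + t)) * (n + a + b * (m + t)) +
        D (Igen n) (Sum.inr (n + t)) * (n + t + a + b * m) := by
  have h := hD.wab_apply (Lgen m) (Igen n) (Sum.inr (m + n + t))
  rw [wabBracket_Lgen_Igen, map_smul, wabBracket_swap a b (D (Igen n)), Finsupp.smul_apply,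
    Finsupp.neg_apply, wabBracket_Igen_apply_inr, wabBracket_Lgen_apply_inr,
    show m + n + t - n = m + t by ring, show m + n + t - m = n + t by ring] at h
  push_cast at h
  linear_combination -h

lemma wab_Igen_Igen_inr (m n t : ℤ) :
    D (Igen m) (Sum.inl (m + t)) * (n + a + b * (m + t)) =
      D (Igen n) (Sum.inl (n + t)) * (m + a + b * (n + t)) := by
  have h := hD.wab_apply (Igen m) (Igen n) (Sum.inr (m + n + t))
  rw [wabBracket_Igen_Igen, map_zero, Finsupp.coe_zero, Pi.zero_apply, mul_zero,
    wabBracket_swap a b (D (Igen n)), Finsupp.neg_apply, wabBracket_Igen_apply_inr,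
    wabBracket_Igen_apply_inr,
    show m + n + t - n = m + t by ring, show m + n + t - m = n + t by ring] at h
  push_cast at h
  linear_combination h

lemma wab_Igen_inl_support {n t : ℤ} (h : D (Igen n) (Sum.inl (n + t)) ≠ 0) :
    (t : ℂ) = n + 2 * a := by
  have e := hD.wab_Lgen_Igen_inl 0 n t
  simp only [zero_add, Int.cast_zero, mul_zero, add_zero, sub_zero] at e
  have : ((t : ℂ) - n - 2 * a) * D (Igen n) (Sum.inl (n + t)) = 0 := by linear_combination -e
  linear_combination (mul_eq_zero.mp this).resolve_right h

lemma wab_Igen_inl_eq_zero (n t : ℤ) : D (Igen n) (Sum.inl (n + t)) = 0 := by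
  by_contra hp
  have ht := hD.wab_Igen_inl_support hp
  have key : ∀ j : ℤ, j ≠ 0 →
      ((n : ℂ) + j + a + b * (n + t)) * D (Igen n) (Sum.inl (n + t)) = 0 := by
    intro j hj
    have hj0 : D (Igen (n + j)) (Sum.inl (n + j + t)) = 0 := by
      by_contra h'
      have ht' := hD.wab_Igen_inl_support h'
      push_cast at ht'
      exact hj (by exact_mod_cast (by linear_combination ht - ht' : (j : ℂ) = 0))
    have e := hD.wab_Igen_Igen_inr (n + j) n t
    rw [hj0] at e
    push_cast at e
    linear_combination -e
  exact hp (by linear_combination key 2 two_ne_zero - key 1 one_ne_zero)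

lemma wab_Lgen_inl_eq_of_ne {m t : ℤ} (h : m ≠ t) :
    D (Lgen m) (Sum.inl (m + t)) = D (Lgen 0) (Sum.inl t) := by
  have e := hD.wab_Lgen_Lgen_inl m 0 t
  simp only [add_zero, zero_add, Int.cast_zero, sub_zero, zero_sub] at e
  have : ((t : ℂ) - m) * (D (Lgen m) (Sum.inl (m + t)) - D (Lgen 0) (Sum.inl t)) = 0 := by
    linear_combination -e
  have hne : (t : ℂ) - m ≠ 0 := sub_ne_zero.mpr (by exact_mod_cast h.symm)
  linear_combination (mul_eq_zero.mp this).resolve_left hne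

lemma wab_Lgen_inl_eq (m t : ℤ) : D (Lgen m) (Sum.inl (m + t)) = D (Lgen 0) (Sum.inl t) := by
  obtain rfl | h := eq_or_ne t m
  · obtain ⟨k, l, hk, hl, hkl, rfl⟩ := Int.exists_ne_zero_ne_zero_ne_add_eq t
    have e := hD.wab_Lgen_Lgen_inl k l (k + l)
    rw [hD.wab_Lgen_inl_eq_of_ne (by omega : k ≠ k + l),
      hD.wab_Lgen_inl_eq_of_ne (by omega : l ≠ k + l)] at e
    have hne : (k : ℂ) - l ≠ 0 := sub_ne_zero.mpr (by exact_mod_cast hkl)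
    have : 2 * ((k : ℂ) - l) * (D (Lgen (k + l)) (Sum.inl (k + l + (k + l))) -
        D (Lgen 0) (Sum.inl (k + l))) = 0 := by
      push_cast at e
      linear_combination e
    linear_combination (mul_eq_zero.mp this).resolve_left (mul_ne_zero two_ne_zero hne)
  · exact hD.wab_Lgen_inl_eq_of_ne h.symm

lemma wab_Lgen_zero_inl_eq_zero (hb : b ≠ -1) {k : ℤ} (hk : k ≠ 0) :
    D (Lgen 0) (Sum.inl k) = 0 := by
  have hQ : ∀ m n : ℤ, 2 * ((n : ℂ) + a + b * m) * D (Igen (m + n)) (Sum.inr (m + n + k)) =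
      D (Lgen 0) (Sum.inl k) * (n + a + b * (m + k)) +
        D (Igen n) (Sum.inr (n + k)) * (n + k + a + b * m) := fun m n => by
    rw [← hD.wab_Lgen_inl_eq m k]
    exact hD.wab_Lgen_Igen_inr m n k
  have h21 := hQ 2 1
  have h10 := hQ 1 0
  have h03 := hQ 0 3
  have h01 := hQ 0 1
  have h00 := hQ 0 0
  norm_num at h21 h10 h03 h01 h00
  have : 4 * (1 + b) * k * D (Lgen 0) (Sum.inl k) = 0 := by
    linear_combination -((k - 1 - a) * (k - 3 - a)) * h21 - 2 * (1 + a + 2 * b) * (k - 1 - a) * h03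
      + (1 + k + a + 2 * b) * (k - 3 - a) * h01 + 2 * (k - a) * (k - 1 - a) * h10
      + 4 * (a + b) * (k - a) * h01 - 2 * (k + a + b) * (k - 1 - a) * h00
  have hb' : (1 : ℂ) + b ≠ 0 := fun h => hb (by linear_combination h)
  exact (mul_eq_zero.mp this).resolve_left
    (mul_ne_zero (mul_ne_zero (by norm_num) hb') (Int.cast_ne_zero.mpr hk))

lemma wab_Lgen_inl_eq_zero (hb : b ≠ -1) (h0 : D (Lgen 0) (Sum.inl 0) = 0) (m s : ℤ) :
    D (Lgen m) (Sum.inl s) = 0 := by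
  rw [← add_sub_cancel m s, hD.wab_Lgen_inl_eq]
  obtain ht | ht := eq_or_ne (s - m) 0
  · rw [ht]; exact h0
  · exact hD.wab_Lgen_zero_inl_eq_zero hb ht

lemma wab_Igen_inr_support (hb : b ≠ -1) (h0 : D (Lgen 0) (Sum.inl 0) = 0) {n t : ℤ}
    (h : D (Igen n) (Sum.inr (n + t)) ≠ 0) : (t : ℂ) = n + a := by
  have e := hD.wab_Lgen_Igen_inr 0 n t
  simp only [zero_add, Int.cast_zero, mul_zero, add_zero, hD.wab_Lgen_inl_eq_zero hb h0] at e
  have : ((t : ℂ) - n - a) * D (Igen n) (Sum.inr (n + t)) = 0 := by linear_combination -e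
  linear_combination (mul_eq_zero.mp this).resolve_right h

lemma wab_Igen_inr_eq_zero (hb : b ≠ -1) (h0 : D (Lgen 0) (Sum.inl 0) = 0) (n t : ℤ) :
    D (Igen n) (Sum.inr (n + t)) = 0 := by
  by_contra hq
  have ht := hD.wab_Igen_inr_support hb h0 hq
  have vanish : ∀ k : ℤ, k ≠ n → D (Igen k) (Sum.inr (k + t)) = 0 := fun k hk => by
    by_contra h'
    have hkn : (k : ℂ) = n := by linear_combination ht - hD.wab_Igen_inr_support hb h0 h'
    exact hk (by exact_mod_cast hkn)
  have hf := hD.wab_Lgen_inl_eq_zero hb h0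
  have left : ∀ j : ℤ, j ≠ 0 →
      ((n : ℂ) - j + a + b * j) * D (Igen n) (Sum.inr (n + t)) = 0 := by
    intro j hj
    have e := hD.wab_Lgen_Igen_inr j (n - j) t
    rw [add_sub_cancel, hf, vanish (n - j) (by omega)] at e
    push_cast at e
    linear_combination e / 2
  have right : ∀ j : ℤ, j ≠ 0 →
      ((n : ℂ) + t + a + b * j) * D (Igen n) (Sum.inr (n + t)) = 0 := by
    intro j hj
    have e := hD.wab_Lgen_Igen_inr j n t
    rw [hf, vanish (j + n) (by omega)] at e
    linear_combination -e
  apply hq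
  linear_combination right 2 two_ne_zero - right 1 one_ne_zero - left 2 two_ne_zero +
    left 1 one_ne_zero

lemma wab_Lgen_inr_eq_Lgen_zero (m t : ℤ) :
    D (Lgen m) (Sum.inr (m + t)) * (t + a - m) = (t + a + b * m) * D (Lgen 0) (Sum.inr t) := by
  have e := hD.wab_Lgen_Lgen_inr m 0 t
  simp only [add_zero, zero_add, Int.cast_zero, sub_zero, mul_zero] at e
  linear_combination -e

lemma wab_Lgen_zero_inr_eq_zero (hb : b ≠ -1) (t : ℤ) : D (Lgen 0) (Sum.inr t) = 0 := by
  have h1 := hD.wab_Lgen_Lgen_inr 1 (-1) t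
  have h2 := hD.wab_Lgen_Lgen_inr 2 1 t
  have a1 := hD.wab_Lgen_inr_eq_Lgen_zero 1 t
  have am1 := hD.wab_Lgen_inr_eq_Lgen_zero (-1) t
  have a2 := hD.wab_Lgen_inr_eq_Lgen_zero 2 t
  have a3 := hD.wab_Lgen_inr_eq_Lgen_zero 3 t
  norm_num at h1 h2 a1 am1 a2 a3
  have H1 : (2 + b - b ^ 2) * D (Lgen 0) (Sum.inr t) = 0 := by
    linear_combination -((t + a) ^ 2 - 1) / 2 * h1 - (1 + (t + a) - b) * ((t + a) + 1) / 2 * a1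
      + ((t + a) - 1 + b) * ((t + a) - 1) / 2 * am1
  have H2 : (6 * b * (1 + b) + 2 * (t + a) * (2 + b - b ^ 2)) * D (Lgen 0) (Sum.inr t) = 0 := by
    linear_combination ((t + a) - 1) * ((t + a) - 2) * ((t + a) - 3) * h2
      - 2 * ((t + a) - 1) * ((t + a) - 2) * a3
      + (2 + (t + a) + b) * ((t + a) - 1) * ((t + a) - 3) * a2
      - (1 + (t + a) + 2 * b) * ((t + a) - 2) * ((t + a) - 3) * a1
  have H3 : b * D (Lgen 0) (Sum.inr t) = 0 := by
    have hb' : (1 : ℂ) + b ≠ 0 := fun h => hb (by linear_combination h)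
    have : (1 + b) * (6 * b * D (Lgen 0) (Sum.inr t)) = 0 := by
      linear_combination H2 - 2 * (t + a) * H1
    linear_combination (mul_eq_zero.mp this).resolve_left hb' / 6
  linear_combination H1 / 2 + (b - 1) / 2 * H3

lemma wab_Lgen_inr_support (hb : b ≠ -1) {m t : ℤ} (h : D (Lgen m) (Sum.inr (m + t)) ≠ 0) :
    (t : ℂ) = m - a := by
  have e := hD.wab_Lgen_inr_eq_Lgen_zero m t
  rw [hD.wab_Lgen_zero_inr_eq_zero hb, mul_zero] at e
  linear_combination (mul_eq_zero.mp e).resolve_left h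

lemma wab_Lgen_inr_eq_zero (hb : b ≠ -1) (r t : ℤ) : D (Lgen r) (Sum.inr (r + t)) = 0 := by
  by_contra hg
  have ht := hD.wab_Lgen_inr_support hb hg
  have vanish : ∀ k : ℤ, k ≠ r → D (Lgen k) (Sum.inr (k + t)) = 0 := fun k hk => by
    by_contra h'
    have hkr : (k : ℂ) = r := by linear_combination ht - hD.wab_Lgen_inr_support hb h'
    exact hk (by exact_mod_cast hkr)
  obtain ⟨m, n, hm, hn, hmn, rfl⟩ := Int.exists_ne_zero_ne_zero_ne_add_eq r
  have e := hD.wab_Lgen_Lgen_inr m n t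
  rw [vanish m (by omega), vanish n (by omega)] at e
  have hne : (m : ℂ) - n ≠ 0 := sub_ne_zero.mpr (by exact_mod_cast hmn)
  have : 2 * ((m : ℂ) - n) * D (Lgen (m + n)) (Sum.inr (m + n + t)) = 0 := by
    linear_combination e
  exact hg ((mul_eq_zero.mp this).resolve_left (mul_ne_zero two_ne_zero hne))

lemma wab_eq_zero (hb : b ≠ -1) (h0 : D (Lgen 0) (Sum.inl 0) = 0) : D = 0 := by
  refine Finsupp.lhom_ext fun e c => ?_
  rw [← mul_one c, ← smul_eq_mul, ← Finsupp.smul_single, map_smul, map_smul]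
  congr 1
  ext i
  rcases e with m | m <;> rcases i with s | s <;> rw [← add_sub_cancel m s]
  · exact hD.wab_Lgen_inl_eq_zero hb h0 m _
  · exact hD.wab_Lgen_inr_eq_zero hb m _
  · exact hD.wab_Igen_inl_eq_zero m _
  · exact hD.wab_Igen_inr_eq_zero hb h0 m _

lemma wab_eq_smul_id (hb : b ≠ -1) : D = D (Lgen 0) (Sum.inl 0) • LinearMap.id := by
  have hD' : IsHalfDerivation (wabBracket a b) (D - D (Lgen 0) (Sum.inl 0) • LinearMap.id) := by
    rw [wabBracket_eq_linearCombination] at hD ⊢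
    exact hD.sub_smul_id _
  exact sub_eq_zero.mp (hD'.wab_eq_zero hb (by simp [Lgen]))

end IsHalfDerivation

theorem no_transposedPoisson_on_wab_general (a b : ℂ) (hb : b ≠ -1)
    (m : Wab →ₗ[ℂ] Wab →ₗ[ℂ] Wab)
    (hcomm : ∀ x y : Wab, m x y = m y x)
    (hcompat : ∀ x y z : Wab, (2 : ℂ) • m z (wabBracket a b x y) =
        wabBracket a b (m z x) y + wabBracket a b x (m z y)) :
    m = 0 :=
  LinearMap.eq_zero_of_comm_of_forall_eq_smul_id one_lt_rank_wab m hcomm fun z =>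
    ⟨_, IsHalfDerivation.wab_eq_smul_id (fun x y => hcompat x y z) hb⟩

/-- For `b ≠ -1` there are no non-trivial transposed Poisson
algebra structures on `𝒲(a,b)`. -/
theorem no_transposedPoisson_on_wab (a b : ℂ) (hb : b ≠ -1)
    (m : Wab →ₗ[ℂ] Wab →ₗ[ℂ] Wab)
    (hcomm : ∀ x y : Wab, m x y = m y x)
    (hassoc : ∀ x y z : Wab, m (m x y) z = m x (m y z))
    (hcompat : ∀ x y z : Wab, (2 : ℂ) • m z (wabBracket a b x y) =
        wabBracket a b (m z x) y + wabBracket a b x (m z y)) :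
    m = 0 :=
  no_transposedPoisson_on_wab_general a b hb m hcomm hcompat
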